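/- Let $k$ be a field and let $V \subseteq \prod_{i=1}^n V_i$ be a subspace of a finite product of finite-dimensional $k$-vector spaces such that each projection $V \to V_i$ is surjective. Suppose that for every pair $i \neq j$ the projection of $V$ to $V_i \times V_j$ equals a prescribed subspace $V_{ij} \subseteq V_i \times V_j$. Then $V$ is contained in—and if $V$ is the largest subspace with these pairwise projections, equal to—the subspace $W = \{(v_1, \dots, v_n) \in \prod_i V_i : (v_i, v_j) \in V_{ij} \text{ for all } i \neq j\}$. In particular, if $V$ is a product of iso-graphs over a partition of $\{1, \dots, n\}$, then $V$ is the largest subspace of $\prod_i V_i$ whose projection to every pair $V_i \times V_j$ coincides with the projection of $V$. -/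
import Mathlib


/-- If a subspace `V` of a finite product of finite-dimensional vector spaces is a product
of iso-graphs over a partition of the index set, then `V` is exactly the set of vectors all
of whose pairwise projections lie in the corresponding pairwise projections of `V`; in
particular `V` is the largest subspace with the prescribed pairwise projections. -/
theorem stmt_12 {k : Type*} [Field k] {n : ℕ} (V : Fin n → Type*)
    [∀ i, AddCommGroup (V i)] [∀ i, Module k (V i)] [∀ i, FiniteDimensional k (V i)]
    (Vs : Submodule k (∀ i, V i))
    (κ : Type*) (f : Fin n → κ)
    (Gh : (h : κ) → Submodule k (∀ i : {i // f i = h}, V i.1))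
    (hiso : ∀ (h : κ) (i : {i // f i = h}),
      Function.Bijective fun v : Gh h => (v : ∀ j : {j // f j = h}, V j.1) i)
    (hVs : ∀ v : ∀ i, V i, v ∈ Vs ↔ ∀ h : κ, (fun i : {i // f i = h} => v i.1) ∈ Gh h) :
    ∀ v : ∀ i, V i, v ∈ Vs ↔
      ∀ i j : Fin n, i ≠ j → ∃ u ∈ Vs, u i = v i ∧ u j = v j := by
  intro v
  constructor
  · intro hv i j _
    exact ⟨v, hv, rfl, rfl⟩
  · intro hp
    rw [hVs]
    intro h
    by_cases hne : Nonempty {i // f i = h}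
    · obtain ⟨i₀⟩ := hne
      obtain ⟨w, hw⟩ := (hiso h i₀).2 (v i₀.1)
      have key : (fun i : {i // f i = h} => v i.1) = (w : ∀ j : {j // f j = h}, V j.1) := by
        funext j
        by_cases hji : j = i₀
        · subst hji; exact hw.symm
        · have hne' : j.1 ≠ i₀.1 := fun e => hji (Subtype.ext e)
          obtain ⟨u, hu, huj, hui⟩ := hp j.1 i₀.1 hne'
          have hu' := (hVs u).1 hu h
          have heq : (⟨(fun i : {i // f i = h} => u i.1), hu'⟩ : Gh h) = w := by
            apply (hiso h i₀).1
            show u i₀.1 = _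
            rw [hui, hw]
          have := congrArg (fun z : Gh h => (z : ∀ j' : {j' // f j' = h}, V j'.1) j) heq
          simp only at this
          rw [← this]
          exact huj.symm
      rw [key]; exact w.2
    · have hz : (fun i : {i // f i = h} => v i.1) = 0 := by
        funext j; exact absurd ⟨j⟩ hne
      rw [hz]; exact (Gh h).zero_mem
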